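/- Let y = Q(x,y) be a strongly reduced Henselian equation with Q(x,y) = Σ_{i,j} a_{i,j} x^i y^j ∈ K[x_1,x_1^{-1},...,x_r,x_r^{-1}][y], K of characteristic zero. Then the support of the unique generalized-series solution y_0 = Σ_{n >_grlex 0} c_n x^n is contained in the monoid S generated by the exponents i ∈ ℤ^r of the nonzero coefficients a_{i,j} of Q. -/

import Mathlib

/-- `ℤ^r`, to be equipped below with the graded lexicographic order. -/
def GrLexZ (r : ℕ) : Type := Fin r →₀ ℤ

namespace GrLexZ

variable {r : ℕ}

noncomputable instance : AddCommGroup (GrLexZ r) := inferInstanceAs (AddCommGroup (Fin r →₀ ℤ))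

/-- The underlying finitely supported function of an element of `GrLexZ r`. -/
def toFinsupp (v : GrLexZ r) : Fin r →₀ ℤ := v

theorem toFinsupp_add (a b : GrLexZ r) : toFinsupp (a + b) = toFinsupp a + toFinsupp b := rfl

theorem toFinsupp_injective : Function.Injective (toFinsupp (r := r)) := fun _ _ h => h

/-- Embedding of grlex `ℤ^r` into lex `ℤ^{r+1}`, prepending the total degree. -/
noncomputable def embed (r : ℕ) : GrLexZ r → Lex (Fin (r + 1) →₀ ℤ) := fun v =>
  toLex (Finsupp.equivFunOnFinite.symm (Fin.cons (∑ i, toFinsupp v i) ⇑(toFinsupp v)))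

theorem embed_add (a b : GrLexZ r) : embed r (a + b) = embed r a + embed r b := by
  show toLex _ = toLex _ + toLex _
  rw [← toLex_add]
  congr 1
  ext i
  simp only [Finsupp.add_apply, Finsupp.coe_equivFunOnFinite_symm]
  refine Fin.cases ?_ ?_ i <;>
    simp [Fin.cons_zero, Fin.cons_succ, toFinsupp_add, Finsupp.add_apply,
      Finset.sum_add_distrib]

theorem embed_injective : Function.Injective (embed (r := r)) := by
  intro a b h
  have h1 := toLex.injective h
  have h2 := Finsupp.equivFunOnFinite.symm.injective h1
  have h3 : ⇑(toFinsupp a) = ⇑(toFinsupp b) := by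
    funext i
    have := congrFun h2 i.succ
    simpa [Fin.cons_succ] using this
  exact toFinsupp_injective (DFunLike.coe_injective h3)

noncomputable instance : LinearOrder (GrLexZ r) :=
  LinearOrder.lift' (embed r) embed_injective

theorem le_def (a b : GrLexZ r) : a ≤ b ↔ embed r a ≤ embed r b := Iff.rfl

noncomputable instance : IsOrderedAddMonoid (GrLexZ r) :=
  { add_le_add_left := by
      intro a b hab c
      rw [le_def] at hab ⊢
      rw [embed_add, embed_add]
      first | exact add_le_add_left hab _ | exact add_le_add_right hab _ }

end GrLexZ


/-- Let `y = Q(x,y) = Σ_{(i,j) ∈ s} a_{i,j} x^i y^j` be a strongly reduced Henselian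
equation over a field `K` of characteristic zero (all exponents `i` grlex-positive,
`Q(x,0) ≢ 0`).  Then the support of any generalized-series solution
`y₀ = Σ_{n >_grlex 0} c_n x^n` is contained in the (additive) monoid generated by the
exponents `i ∈ ℤ^r` of the nonzero coefficients `a_{i,j}` of `Q`. -/
theorem solution_support_in_exponent_monoid (K : Type*) [Field K] [CharZero K]
    (r : ℕ) (s : Finset (GrLexZ r × ℕ)) (a : GrLexZ r × ℕ → K)
    (hpos : ∀ p ∈ s, (0 : GrLexZ r) < p.1)
    (hQ0 : ∃ i : GrLexZ r, (i, 0) ∈ s ∧ a (i, 0) ≠ 0)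
    (y0 : HahnSeries (GrLexZ r) K)
    (hy0pos : ∀ n ∈ y0.support, (0 : GrLexZ r) < n)
    (hy0 : y0 = ∑ p ∈ s, (HahnSeries.single p.1 (a p)) * y0 ^ p.2) :
    ∀ n ∈ y0.support,
      n ∈ AddSubmonoid.closure {i : GrLexZ r | ∃ j : ℕ, (i, j) ∈ s ∧ a (i, j) ≠ 0} := by
  by_contra hcon
  push_neg at hcon
  set S := AddSubmonoid.closure {i : GrLexZ r | ∃ j : ℕ, (i, j) ∈ s ∧ a (i, j) ≠ 0} with hS
  set T : Set (GrLexZ r) := {n | n ∈ y0.support ∧ n ∉ S} with hT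
  obtain ⟨n0, hn0s, hn0S⟩ := hcon
  have hTne : T.Nonempty := ⟨n0, hn0s, hn0S⟩
  have hTwf : T.IsWF := (y0.isPWO_support.isWF.mono (fun x hx => hx.1))
  set m := hTwf.min hTne with hm
  have hmT : m ∈ T := hTwf.min_mem hTne
  have hmin : ∀ k ∈ y0.support, k < m → k ∈ S := by
    intro k hk hkm
    by_contra hkS
    exact (hTwf.not_lt_min hTne ⟨hk, hkS⟩) hkm
  -- key lemma about powers
  have hpow : ∀ j : ℕ, ∀ u ∈ (y0 ^ j).support, 0 ≤ u ∧ (u < m → u ∈ S) := by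
    intro j
    induction j with
    | zero =>
      intro u hu
      rw [pow_zero, HahnSeries.support_one] at hu
      rw [hu]
      exact ⟨le_refl _, fun _ => zero_mem S⟩
    | succ j ih =>
      intro u hu
      rw [pow_succ'] at hu
      obtain ⟨k, hk, v, hv, rfl⟩ := HahnSeries.support_mul_subset hu
      have hk0 : 0 < k := hy0pos k hk
      have hv0 : 0 ≤ v := (ih v hv).1
      constructor
      · positivity
      · intro hlt
        have hkm : k < m := lt_of_le_of_lt (le_add_of_nonneg_right hv0) hlt
        have hvm : v < m := lt_of_le_of_lt (le_add_of_nonneg_left hk0.le) hlt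
        exact add_mem (hmin k hk hkm) ((ih v hv).2 hvm)
  -- compute coefficient at m
  have hcoeff : y0.coeff m = 0 := by
    conv_lhs => rw [hy0]
    rw [show (∑ p ∈ s, (HahnSeries.single p.1 (a p)) * y0 ^ p.2).coeff m
        = ∑ p ∈ s, ((HahnSeries.single p.1 (a p)) * y0 ^ p.2).coeff m from
      map_sum (HahnSeries.coeff.addMonoidHom m) _ s]
    refine Finset.sum_eq_zero fun p hp => ?_
    have h1 : ((HahnSeries.single p.1 (a p)) * y0 ^ p.2).coeff m
        = a p * (y0 ^ p.2).coeff (m - p.1) := by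
      have h := HahnSeries.coeff_single_mul_add (r := a p) (x := y0 ^ p.2)
        (a := m - p.1) (b := p.1)
      rwa [sub_add_cancel] at h
    rw [h1]
    rcases eq_or_ne (a p) 0 with h | h
    · rw [h, zero_mul]
    rcases eq_or_ne ((y0 ^ p.2).coeff (m - p.1)) 0 with h2 | h2
    · rw [h2, mul_zero]
    exfalso
    apply hmT.2
    have hp1 : 0 < p.1 := hpos p hp
    have hsub : m - p.1 ∈ (y0 ^ p.2).support := h2
    have := (hpow p.2 _ hsub).2 (by simpa using sub_lt_self m hp1)
    have hgen : p.1 ∈ S := AddSubmonoid.subset_closure ⟨p.2, by simpa using hp, by simpa using h⟩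
    have := add_mem hgen this
    simpa using this
  exact hmT.1 hcoeff
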